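/- arXiv:2102.00421 — 4 statements merged into one kernel-verified Lean document; each statement's English description precedes it below -/
import Mathlib

section
/- For vectors α, β ∈ [q]^d and γ ∈ ℝ^d: α + β = γ holds if and only if ‖α−β‖² = ‖2α−γ‖² and ‖α−β‖² = ‖2β−γ‖². -/
/-! By the parallelogram law, `‖u + v‖² + ‖u - v‖² = 2‖u‖² + 2‖v‖²`, so a vector `u` can have the
same length as both `u + v` and `u - v` only when `v = 0`. With `u = α - β` and `v = α + β - γ`
one has `2α - γ = u + v` and `2β - γ = -(u - v)`, which gives the nontrivial direction. -/

theorem eq_zero_of_norm_eq_norm_add_of_norm_eq_norm_sub {𝕜 E : Type*} [RCLike 𝕜]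
    [NormedAddCommGroup E] [InnerProductSpace 𝕜 E] {u v : E}
    (h_add : ‖u‖ = ‖u + v‖) (h_sub : ‖u‖ = ‖u - v‖) : v = 0 := by
  have parallelogram := parallelogram_law_with_norm 𝕜 u v
  rw [← h_add, ← h_sub] at parallelogram
  have hv : ‖v‖ * ‖v‖ = 0 := by linarith
  exact norm_eq_zero.mp (mul_self_eq_zero.mp hv)

theorem add_eq_iff_norm_sub_eq_norm_two_smul_sub {E : Type*} [NormedAddCommGroup E]
    [InnerProductSpace ℝ E] (a b c : E) :
    a + b = c ↔ (‖a - b‖ = ‖(2:ℝ) • a - c‖ ∧ ‖a - b‖ = ‖(2:ℝ) • b - c‖) := by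
  have h_a : (2:ℝ) • a - c = (a - b) + (a + b - c) := by module
  have h_b : (2:ℝ) • b - c = -((a - b) - (a + b - c)) := by module
  rw [h_a, h_b, norm_neg]
  constructor
  · rintro rfl
    simp
  · rintro ⟨h_add, h_sub⟩
    exact sub_eq_zero.mp (eq_zero_of_norm_eq_norm_add_of_norm_eq_norm_sub (𝕜 := ℝ) h_add h_sub)

theorem stmt_1_general (d : ℕ) (α β γ : EuclideanSpace ℝ (Fin d)) :
    α + β = γ ↔
      (‖α - β‖ ^ 2 = ‖(2:ℝ) • α - γ‖ ^ 2 ∧ ‖α - β‖ ^ 2 = ‖(2:ℝ) • β - γ‖ ^ 2) := by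
  simp only [sq_eq_sq₀ (norm_nonneg _) (norm_nonneg _)]
  exact add_eq_iff_norm_sub_eq_norm_two_smul_sub α β γ

/-- For vectors α, β ∈ [q]^d (entries in {0,…,q−1}) and γ ∈ ℝ^d:
α + β = γ iff ‖α−β‖² = ‖2α−γ‖² and ‖α−β‖² = ‖2β−γ‖². -/
theorem stmt_1 (q d : ℕ) (α β γ : EuclideanSpace ℝ (Fin d))
    (hα : ∀ i, ∃ k : ℕ, k < q ∧ α i = k)
    (hβ : ∀ i, ∃ k : ℕ, k < q ∧ β i = k) :
    α + β = γ ↔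
      (‖α - β‖ ^ 2 = ‖(2:ℝ) • α - γ‖ ^ 2 ∧ ‖α - β‖ ^ 2 = ‖(2:ℝ) • β - γ‖ ^ 2) :=
  stmt_1_general d α β γ
end

section
/- Fix q ≥ 2, d ≥ 1 and an integer y with base-q digits y_1,…,y_d. Let X be uniformly distributed over {0,…,q^d − 1} with base-q digits X_1,…,X_d (these are i.i.d. uniform on {0,…,q−1}). For each i, the probability that the carry C(X,y)_i equals 1 is at most (y_i + 1)/q. -/
/-- The i-th base-q digit of w. -/
def digit (q w i : ℕ) : ℕ := w / q ^ i % q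

/-- Carry bits of base-q addition: `carry q x y 0 = 0`, and the carry produced
at digit i (carry into position i+1) is `carry q x y (i+1)`. -/
def carry (q x y : ℕ) : ℕ → ℕ
  | 0 => 0
  | i + 1 => if q ≤ digit q x i + digit q y i + carry q x y i then 1 else 0

/-!
The carry into position `j` is `1` exactly when the low parts `x % q ^ j` and `y % q ^ j`
overflow `q ^ j`. As `x` runs over `[0, q ^ d)`, the low part `x % q ^ j` takes every residue
`q ^ (d - j)` times, and exactly `y % q ^ j` residues overflow. For `j = i + 1` finally
`y % q ^ (i + 1) < (y_i + 1) q ^ i`.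
-/

open Finset Function

theorem Nat.div_eq_ite_of_lt_two_mul {n q : ℕ} (h : n < 2 * q) :
    n / q = if q ≤ n then 1 else 0 := by
  split_ifs with hqn
  · exact Nat.div_eq_of_lt_le (by omega) (by omega)
  · exact Nat.div_eq_of_lt (by omega)

theorem Nat.count_mul_of_periodic {p : ℕ → Prop} [DecidablePred p] {N : ℕ}
    (hp : Periodic p N) (K : ℕ) : Nat.count p (K * N) = K * Nat.count p N := by
  induction K with
  | zero => simp
  | succ K ih =>
    have shift : (fun k ↦ p (K * N + k)) = p := funext fun k ↦ by
      rw [add_comm]; exact hp.nat_mul K k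
    simp only [Nat.succ_mul, Nat.count_add, ih, shift]

theorem Nat.count_le_mod_add {N m : ℕ} (hm : m ≤ N) :
    Nat.count (fun x ↦ N ≤ x % N + m) N = m := by
  rw [Nat.count_eq_card_filter_range]
  have hfilter : {x ∈ range N | N ≤ x % N + m} = Ico (N - m) N := by
    ext x
    simp only [mem_filter, mem_range, mem_Ico]
    constructor
    · rintro ⟨hx, hle⟩
      rw [Nat.mod_eq_of_lt hx] at hle
      omega
    · rintro ⟨hle, hx⟩
      rw [Nat.mod_eq_of_lt hx]
      omega
  rw [hfilter, Nat.card_Ico]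
  omega

theorem mod_pow_succ_eq_add_digit (q x i : ℕ) :
    x % q ^ (i + 1) = x % q ^ i + q ^ i * digit q x i :=
  Nat.mod_pow_succ

theorem mod_pow_succ_le (q y i : ℕ) (hq : 0 < q) :
    y % q ^ (i + 1) ≤ (digit q y i + 1) * q ^ i := by
  have := Nat.mod_lt y (pow_pos hq i)
  rw [mod_pow_succ_eq_add_digit]
  linarith

section carry

variable {q x y : ℕ}

theorem carry_eq_div (hq : 0 < q) (i : ℕ) :
    carry q x y i = (x % q ^ i + y % q ^ i) / q ^ i := by
  induction i with
  | zero => simp [carry, Nat.mod_one]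
  | succ i ih =>
    have hQ : 0 < q ^ i := pow_pos hq i
    have hxQ := Nat.mod_lt x hQ
    have hyQ := Nat.mod_lt y hQ
    have hx : digit q x i < q := Nat.mod_lt _ hq
    have hy : digit q y i < q := Nat.mod_lt _ hq
    have split_low : (x % q ^ (i + 1) + y % q ^ (i + 1)) / q ^ (i + 1)
        = (digit q x i + digit q y i + (x % q ^ i + y % q ^ i) / q ^ i) / q := by
      rw [mod_pow_succ_eq_add_digit, mod_pow_succ_eq_add_digit, pow_succ,
        ← Nat.div_div_eq_div_mul,
        show x % q ^ i + q ^ i * digit q x i + (y % q ^ i + q ^ i * digit q y i)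
          = x % q ^ i + y % q ^ i + (digit q x i + digit q y i) * q ^ i by ring,
        Nat.add_mul_div_right _ _ hQ, add_comm]
    have hc : (x % q ^ i + y % q ^ i) / q ^ i < 2 :=
      (Nat.div_lt_iff_lt_mul hQ).2 (by omega)
    rw [split_low, Nat.div_eq_ite_of_lt_two_mul (by omega), carry, ih]

theorem carry_eq_one_iff (hq : 0 < q) (i : ℕ) :
    carry q x y i = 1 ↔ q ^ i ≤ x % q ^ i + y % q ^ i := by
  have hQ : 0 < q ^ i := pow_pos hq i
  rw [carry_eq_div hq, Nat.div_eq_ite_of_lt_two_mul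
    (by have := Nat.mod_lt x hQ; have := Nat.mod_lt y hQ; omega)]
  split_ifs with h <;> simp [h]

theorem card_carry_eq_one (hq : 0 < q) {j d : ℕ} (hj : j ≤ d) :
    #{x ∈ range (q ^ d) | carry q x y j = 1} = q ^ (d - j) * (y % q ^ j) := by
  have hQ : 0 < q ^ j := pow_pos hq j
  have hperiodic : Periodic (fun x ↦ q ^ j ≤ x % q ^ j + y % q ^ j) (q ^ j) := fun x ↦ by
    simp only [Nat.add_mod_right]
  rw [← Nat.pow_sub_mul_pow q hj]
  simp only [carry_eq_one_iff hq]
  rw [← Nat.count_eq_card_filter_range, Nat.count_mul_of_periodic hperiodic,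
    Nat.count_le_mod_add (Nat.mod_lt y hQ).le]

end carry

theorem stmt_6_general (q d : ℕ) (hq : 2 ≤ q) (y i : ℕ) (hi : i < d) :
    ((Finset.range (q ^ d)).filter (fun x => carry q x y (i + 1) = 1)).card * q ≤
      (digit q y i + 1) * q ^ d := by
  have hq0 : 0 < q := by omega
  rw [card_carry_eq_one hq0 hi]
  calc q ^ (d - (i + 1)) * (y % q ^ (i + 1)) * q
      ≤ q ^ (d - (i + 1)) * ((digit q y i + 1) * q ^ i) * q := by
        gcongr; exact mod_pow_succ_le q y i hq0
    _ = (digit q y i + 1) * q ^ d := by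
        rw [← Nat.pow_sub_mul_pow q (Nat.succ_le_of_lt hi), pow_succ]; ring

/-- For X uniform on {0,…,q^d−1}, the probability that the carry C(X,y)_i
equals 1 is at most (y_i + 1)/q. -/
theorem stmt_6 (q d : ℕ) (hq : 2 ≤ q) (hd : 1 ≤ d) (y i : ℕ) (hi : i < d) :
    ((Finset.range (q ^ d)).filter (fun x => carry q x y (i + 1) = 1)).card * q ≤
      (digit q y i + 1) * q ^ d :=
  stmt_6_general q d hq y i hi
end

section
/- Let Ω be a finite set and 𝒳 a family of subsets of Ω admitting a fractional cover of total weight c*: nonnegative weights (ω_X)_{X∈𝒳} with ∑_{X∋x} ω_X ≥ 1 for every x ∈ Ω and ∑_X ω_X = c*. Then there exists a subfamily of at most ⌈c* · ln|Ω|⌉ + c* sets from 𝒳 whose union is Ω (in particular, the integral cover number is at most O(c* · log|Ω|)). -/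
/-!
Greedy covering. By double counting, the weights ω cover every set R ⊆ Ω with multiplicity at
least |R|, so some X ∈ 𝒳 meets at least |R|/c* points of R. Picking such a set repeatedly
leaves at most |Ω|(1 - 1/c*)^t ≤ |Ω| e^{-t/c*} points uncovered after t rounds, which is at most
one point once t = ⌈c* ln|Ω|⌉; the leftover points then cost at most 1 ≤ c* further sets.
-/

open Finset Real

section FractionalCover

variable {α : Type*} [DecidableEq α] {𝒳 : Finset (Finset α)} {ω : Finset α → ℝ}

lemma one_le_sum_of_one_le_sum_filter_mem (hω : ∀ X ∈ 𝒳, 0 ≤ ω X) {x : α}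
    (hx : 1 ≤ ∑ X ∈ 𝒳.filter (fun X => x ∈ X), ω X) : 1 ≤ ∑ X ∈ 𝒳, ω X :=
  hx.trans <| sum_le_sum_of_subset_of_nonneg (filter_subset _ _) fun X hX _ => hω X hX

lemma card_le_sum_mul_card_inter {R : Finset α}
    (hcover : ∀ x ∈ R, 1 ≤ ∑ X ∈ 𝒳.filter (fun X => x ∈ X), ω X) :
    (#R : ℝ) ≤ ∑ X ∈ 𝒳, ω X * #(R ∩ X) := by
  calc (#R : ℝ) = ∑ _x ∈ R, (1 : ℝ) := by simp
    _ ≤ ∑ x ∈ R, ∑ X ∈ 𝒳.filter (fun X => x ∈ X), ω X := sum_le_sum hcover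
    _ = ∑ X ∈ 𝒳, ∑ _x ∈ R ∩ X, ω X :=
        sum_comm' fun x X => by simp only [mem_filter, mem_inter]; tauto
    _ = ∑ X ∈ 𝒳, ω X * #(R ∩ X) := by simp [mul_comm]

lemma exists_card_sdiff_le_one_sub_inv_mul (hω : ∀ X ∈ 𝒳, 0 ≤ ω X) {R : Finset α}
    (hcover : ∀ x ∈ R, 1 ≤ ∑ X ∈ 𝒳.filter (fun X => x ∈ X), ω X) (hR : R.Nonempty) :
    ∃ X ∈ 𝒳, (#(R \ X) : ℝ) ≤ (1 - (∑ Y ∈ 𝒳, ω Y)⁻¹) * #R := by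
  obtain ⟨x, hx⟩ := hR
  have hc : 0 < ∑ Y ∈ 𝒳, ω Y :=
    one_pos.trans_le (one_le_sum_of_one_le_sum_filter_mem hω (hcover x hx))
  have h𝒳 : 𝒳.Nonempty := nonempty_of_sum_ne_zero hc.ne'
  obtain ⟨X, hX, hmax⟩ := exists_max_image 𝒳 (fun X => #(R ∩ X)) h𝒳
  refine ⟨X, hX, ?_⟩
  have hRX : (#R : ℝ) ≤ (∑ Y ∈ 𝒳, ω Y) * #(R ∩ X) := by
    calc (#R : ℝ) ≤ ∑ Y ∈ 𝒳, ω Y * #(R ∩ Y) := card_le_sum_mul_card_inter hcover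
      _ ≤ ∑ Y ∈ 𝒳, ω Y * #(R ∩ X) :=
          sum_le_sum fun Y hY =>
            mul_le_mul_of_nonneg_left (by exact_mod_cast hmax Y hY) (hω Y hY)
      _ = (∑ Y ∈ 𝒳, ω Y) * #(R ∩ X) := (sum_mul ..).symm
  have hsplit : (#(R \ X) : ℝ) + #(R ∩ X) = #R := by
    exact_mod_cast card_sdiff_add_card_inter R X
  have hfrac : (∑ Y ∈ 𝒳, ω Y)⁻¹ * #R ≤ #(R ∩ X) := by
    rw [inv_mul_le_iff₀ hc]; exact hRX
  linarith

end FractionalCover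

lemma exists_card_le_card_sdiff_biUnion_le {α : Type*} [DecidableEq α] {Ω : Finset α}
    {𝒳 : Finset (Finset α)} {q : ℝ} (hq : 0 ≤ q)
    (hstep : ∀ R ⊆ Ω, R.Nonempty → ∃ X ∈ 𝒳, (#(R \ X) : ℝ) ≤ q * #R) (t : ℕ) :
    ∃ F ⊆ 𝒳, #F ≤ t ∧ (#(Ω \ F.biUnion id) : ℝ) ≤ q ^ t * #Ω := by
  induction t with
  | zero => exact ⟨∅, empty_subset _, le_rfl, by simp⟩
  | succ t ih =>
    obtain ⟨F, hF𝒳, hFt, hFrest⟩ := ih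
    obtain hR | hR := (Ω \ F.biUnion id).eq_empty_or_nonempty
    · exact ⟨F, hF𝒳, hFt.trans t.le_succ, by rw [hR, card_empty, Nat.cast_zero]; positivity⟩
    obtain ⟨X, hX𝒳, hX⟩ := hstep _ sdiff_subset hR
    refine ⟨insert X F, insert_subset hX𝒳 hF𝒳, (card_insert_le _ _).trans (by omega), ?_⟩
    calc (#(Ω \ (insert X F).biUnion id) : ℝ) = #((Ω \ F.biUnion id) \ X) := by
          rw [biUnion_insert, sdiff_sdiff_left, sup_eq_union, union_comm, id]
      _ ≤ q * #(Ω \ F.biUnion id) := hX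
      _ ≤ q * (q ^ t * #Ω) := mul_le_mul_of_nonneg_left hFrest hq
      _ = q ^ (t + 1) * #Ω := by ring

lemma exists_cover_card_le_add_card_sdiff_biUnion {α : Type*} [DecidableEq α] {Ω : Finset α}
    {𝒳 F : Finset (Finset α)} (hmem : ∀ x ∈ Ω, ∃ X ∈ 𝒳, x ∈ X) (hF : F ⊆ 𝒳) :
    ∃ F' ⊆ 𝒳, #F' ≤ #F + #(Ω \ F.biUnion id) ∧ Ω ⊆ F'.biUnion id := by
  choose! g hg𝒳 hg using hmem
  refine ⟨F ∪ (Ω \ F.biUnion id).image g, union_subset hF ?_, ?_, fun x hx => ?_⟩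
  · exact image_subset_iff.2 fun x hx => hg𝒳 x (mem_sdiff.1 hx).1
  · exact (card_union_le _ _).trans (Nat.add_le_add_left card_image_le _)
  · rw [union_biUnion, mem_union]
    by_cases hxF : x ∈ F.biUnion id
    · exact Or.inl hxF
    · exact Or.inr <|
        mem_biUnion.2 ⟨g x, mem_image_of_mem g (mem_sdiff.2 ⟨hx, hxF⟩), hg x hx⟩

lemma mul_one_sub_inv_pow_ceil_mul_log_le_one {c n : ℝ} (hc : 1 ≤ c) (hn : 0 < n) :
    (1 - c⁻¹) ^ ⌈c * log n⌉₊ * n ≤ 1 := by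
  have hc₀ : 0 < c := one_pos.trans_le hc
  calc (1 - c⁻¹) ^ ⌈c * log n⌉₊ * n ≤ exp (-c⁻¹) ^ ⌈c * log n⌉₊ * n := by
        gcongr
        · linarith [inv_le_one_of_one_le₀ hc]
        · linarith [add_one_le_exp (-c⁻¹)]
    _ = exp (-(⌈c * log n⌉₊ / c)) * n := by rw [← exp_nat_mul]; ring_nf
    _ ≤ exp (-log n) * n := by
        gcongr
        rw [le_div_iff₀ hc₀, mul_comm]
        exact Nat.le_ceil _
    _ = 1 := by rw [exp_neg, exp_log hn, inv_mul_cancel₀ hn.ne']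

/-- Lovász bound: a fractional cover of total weight c* yields an integral
cover of size at most ⌈c*·ln|Ω|⌉ + c*. -/
theorem stmt_9 {α : Type*} [DecidableEq α] (Ω : Finset α) (𝒳 : Finset (Finset α))
    (ω : Finset α → ℝ) (cstar : ℝ)
    (hω : ∀ X ∈ 𝒳, 0 ≤ ω X)
    (hcover : ∀ x ∈ Ω, 1 ≤ ∑ X ∈ 𝒳.filter (fun X => x ∈ X), ω X)
    (htotal : ∑ X ∈ 𝒳, ω X = cstar) :
    ∃ F ⊆ 𝒳, (F.card : ℝ) ≤ (⌈cstar * Real.log (Ω.card : ℝ)⌉ : ℝ) + cstar ∧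
      ∀ x ∈ Ω, ∃ X ∈ F, x ∈ X := by
  obtain rfl | ⟨x₀, hx₀⟩ := Ω.eq_empty_or_nonempty
  · exact ⟨∅, empty_subset _, by simpa [← htotal] using sum_nonneg hω, by simp⟩
  have hc : 1 ≤ cstar := htotal ▸ one_le_sum_of_one_le_sum_filter_mem hω (hcover x₀ hx₀)
  have hmem : ∀ x ∈ Ω, ∃ X ∈ 𝒳, x ∈ X := by
    intro x hx
    obtain ⟨X, hX, -⟩ := exists_ne_zero_of_sum_ne_zero (one_pos.trans_le (hcover x hx)).ne'
    exact ⟨X, mem_filter.1 hX⟩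
  obtain ⟨F, hF𝒳, hFt, hFrest⟩ := exists_card_le_card_sdiff_biUnion_le
    (sub_nonneg.2 (inv_le_one_of_one_le₀ hc)) (fun R hRΩ hR => htotal ▸
      exists_card_sdiff_le_one_sub_inv_mul hω (fun x hx => hcover x (hRΩ hx)) hR)
    ⌈cstar * log #Ω⌉₊
  have hΩ : (0 : ℝ) < #Ω := by exact_mod_cast card_pos.2 ⟨x₀, hx₀⟩
  have hrest : (#(Ω \ F.biUnion id) : ℝ) ≤ 1 :=
    hFrest.trans (mul_one_sub_inv_pow_ceil_mul_log_le_one hc hΩ)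
  obtain ⟨F', hF'𝒳, hF'card, hcov⟩ := exists_cover_card_le_add_card_sdiff_biUnion hmem hF𝒳
  refine ⟨F', hF'𝒳, ?_, fun x hx => by simpa using hcov hx⟩
  have hceil : (⌈cstar * log #Ω⌉₊ : ℝ) = ⌈cstar * log #Ω⌉ := by
    exact_mod_cast Int.natCast_ceil_eq_ceil (by positivity)
  calc (#F' : ℝ) ≤ #F + #(Ω \ F.biUnion id) := by exact_mod_cast hF'card
    _ ≤ ⌈cstar * log #Ω⌉₊ + 1 := by gcongr
    _ ≤ ⌈cstar * log #Ω⌉ + cstar := by rw [hceil]; linarith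
end

section
/- Choosing d = ⌈√((2/λ)·log₂(2N))⌉ and q = ⌈2^{√((λ/2)·log₂(2N))}⌉ with λ = (log₂ e)/2, one has q^d ≥ 2N and λ·d + log₂(d·q²) = 2√(2λ·log₂ N) + o(√(log₂ N)) as N → ∞. -/
open Filter

open Asymptotics Real

/-!
Write `L = log₂ (2N)`, `t = √(2L/λ)` and `s = √(λL/2)`, so that `s t = L` and `λ t = 2 s = √(2λL)`.
Then `q^d ≥ (2^s)^t = 2^L = 2N`. Rounding `t` and `2^s` up costs at most `λ` in `λ d` and at most
`2` in `2 log₂ q`, so the cost is `2√(2λL) + log₂ d + O(1)`. Finally `√(2λL) - √(2λ log₂ N) ≤ √(2λ)`,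
and `log₂ d = o(d)` with `d = O(√(log₂ N))`.
-/

lemma Real.abs_sqrt_add_sub_sqrt_le {x y : ℝ} (hx : 0 ≤ x) (hy : 0 ≤ y) :
    |√(x + y) - √x| ≤ √y := by
  have hle : √x ≤ √(x + y) := sqrt_le_sqrt (by linarith)
  rw [abs_of_nonneg (sub_nonneg.2 hle), sub_le_iff_le_add, sqrt_le_left (by positivity)]
  nlinarith [sq_sqrt hx, sq_sqrt hy, sqrt_nonneg x, sqrt_nonneg y]

lemma Real.rpow_mul_le_natCeil_rpow_pow_natCeil {b s : ℝ} (hb : 1 ≤ b) (hs : 0 ≤ s) (t : ℝ) :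
    b ^ (s * t) ≤ (⌈b ^ s⌉₊ : ℝ) ^ ⌈t⌉₊ :=
  calc b ^ (s * t) ≤ b ^ (s * ⌈t⌉₊) :=
        rpow_le_rpow_of_exponent_le hb (mul_le_mul_of_nonneg_left (Nat.le_ceil t) hs)
    _ = (b ^ s) ^ ⌈t⌉₊ := by rw [rpow_mul (by linarith), rpow_natCast]
    _ ≤ (⌈b ^ s⌉₊ : ℝ) ^ ⌈t⌉₊ := pow_le_pow_left₀ (by positivity) (Nat.le_ceil _) _

lemma Real.abs_logb_natCeil_two_rpow_sub_le {s : ℝ} (hs : 0 ≤ s) :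
    |logb 2 ⌈(2 : ℝ) ^ s⌉₊ - s| ≤ 1 := by
  have hone : (1 : ℝ) ≤ 2 ^ s := one_le_rpow one_le_two hs
  have hlo : (2 : ℝ) ^ s ≤ ⌈(2 : ℝ) ^ s⌉₊ := Nat.le_ceil _
  have hhi : (⌈(2 : ℝ) ^ s⌉₊ : ℝ) ≤ 2 ^ (s + 1) := by
    rw [rpow_add_one two_ne_zero]
    linarith [Nat.ceil_lt_add_one (zero_le_one.trans hone)]
  have hpos : (0 : ℝ) < ⌈(2 : ℝ) ^ s⌉₊ := by linarith
  rw [abs_sub_le_iff]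
  constructor
  · linarith [(logb_le_iff_le_rpow one_lt_two hpos).2 hhi]
  · linarith [(le_logb_iff_rpow_le one_lt_two hpos).2 hlo]

lemma Real.isLittleO_logb_natCeil_atTop : (fun x : ℝ => logb 2 ⌈x⌉₊) =o[atTop] id := by
  have hceil : (fun x : ℝ => (⌈x⌉₊ : ℝ)) ~[atTop] id := isEquivalent_nat_ceil
  have hlog := (isLittleO_log_id_atTop.comp_tendsto
    (hceil.symm.tendsto_atTop tendsto_id)).trans_isBigO hceil.isBigO
  simpa only [logb, div_eq_inv_mul, Function.comp_def] using hlog.const_mul_left (log 2)⁻¹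

lemma Real.logb_two_mul_natCast {N : ℕ} (hN : N ≠ 0) : logb 2 (2 * N) = 1 + logb 2 N := by
  rw [logb_mul two_ne_zero (Nat.cast_ne_zero.2 hN), logb_self_eq_one one_lt_two]

lemma Real.tendsto_sqrt_logb_natCast_atTop :
    Tendsto (fun N : ℕ => √(logb 2 N)) atTop atTop :=
  tendsto_sqrt_atTop.comp ((tendsto_logb_atTop one_lt_two).comp tendsto_natCast_atTop_atTop)

noncomputable def protocolCost (lam : ℝ) (d q : ℕ) : ℝ := lam * d + logb 2 (d * q ^ 2)

lemma abs_protocolCost_natCeil_sub_le {lam x : ℝ} (hlam : 0 < lam) (hx : 0 < x) :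
    |protocolCost lam ⌈√(2 / lam * x)⌉₊ ⌈(2 : ℝ) ^ √(lam / 2 * x)⌉₊
      - logb 2 ⌈√(2 / lam * x)⌉₊ - 2 * √(2 * lam * x)| ≤ lam + 2 := by
  set t := √(2 / lam * x)
  set s := √(lam / 2 * x)
  have hceil : |(⌈t⌉₊ : ℝ) - t| ≤ 1 := by
    rw [abs_sub_le_iff]
    constructor <;> linarith [Nat.le_ceil t, Nat.ceil_lt_add_one (sqrt_nonneg (2 / lam * x))]
  have hlogb := abs_logb_natCeil_two_rpow_sub_le (sqrt_nonneg (lam / 2 * x))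
  have hlam_t : lam * t = √(2 * lam * x) := by
    rw [show 2 * lam * x = lam ^ 2 * (2 / lam * x) by field_simp, sqrt_mul (sq_nonneg _),
      sqrt_sq hlam.le]
  have htwo_s : 2 * s = √(2 * lam * x) := by
    rw [show 2 * lam * x = 2 ^ 2 * (lam / 2 * x) by ring, sqrt_mul (sq_nonneg _),
      sqrt_sq zero_le_two]
  have hd : (⌈t⌉₊ : ℝ) ≠ 0 := by
    have : 0 < t := sqrt_pos.2 (by positivity)
    exact_mod_cast (Nat.ceil_pos.2 this).ne'
  have hq : (⌈(2 : ℝ) ^ s⌉₊ : ℝ) ^ 2 ≠ 0 := by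
    have : 0 < (2 : ℝ) ^ s := by positivity
    exact pow_ne_zero _ (by exact_mod_cast (Nat.ceil_pos.2 this).ne')
  have hsplit : protocolCost lam ⌈t⌉₊ ⌈(2 : ℝ) ^ s⌉₊ - logb 2 ⌈t⌉₊ - 2 * √(2 * lam * x)
      = lam * (⌈t⌉₊ - t) + 2 * (logb 2 ⌈(2 : ℝ) ^ s⌉₊ - s) := by
    rw [protocolCost, logb_mul hd hq, logb_pow]
    push_cast
    linear_combination hlam_t + htwo_s
  calc _ = |lam * (⌈t⌉₊ - t) + 2 * (logb 2 ⌈(2 : ℝ) ^ s⌉₊ - s)| := by rw [hsplit]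
    _ ≤ lam * |(⌈t⌉₊ : ℝ) - t| + 2 * |logb 2 ⌈(2 : ℝ) ^ s⌉₊ - s| := by
      refine (abs_add_le _ _).trans_eq ?_
      rw [abs_mul, abs_mul, abs_of_pos hlam, abs_two]
    _ ≤ lam * 1 + 2 * 1 := by gcongr
    _ = lam + 2 := by ring

/-- The paper's choices of `d` and `q` for the parameter `N`. -/
noncomputable def paramD (lam : ℝ) (N : ℕ) : ℕ := ⌈√(2 / lam * logb 2 (2 * N))⌉₊

noncomputable def paramQ (lam : ℝ) (N : ℕ) : ℕ := ⌈(2 : ℝ) ^ √(lam / 2 * logb 2 (2 * N))⌉₊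

section params

variable {lam : ℝ} (hlam : 0 < lam)
include hlam

lemma two_mul_le_paramQ_pow_paramD {N : ℕ} (hN : 1 ≤ N) :
    (2 * N : ℝ) ≤ (paramQ lam N : ℝ) ^ paramD lam N := by
  set L := logb 2 (2 * N)
  have hL : 0 ≤ L := logb_nonneg one_lt_two (by norm_cast; omega)
  calc (2 * N : ℝ) = 2 ^ L := (rpow_logb two_pos (by norm_num) (by positivity)).symm
    _ = 2 ^ (√(lam / 2 * L) * √(2 / lam * L)) := by
      rw [← sqrt_mul (by positivity), show lam / 2 * L * (2 / lam * L) = L ^ 2 by field_simp,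
        sqrt_sq hL]
    _ ≤ (paramQ lam N : ℝ) ^ paramD lam N :=
      rpow_mul_le_natCeil_rpow_pow_natCeil one_le_two (sqrt_nonneg _) _

lemma protocolCost_params_sub_isBigO_one :
    (fun N : ℕ => protocolCost lam (paramD lam N) (paramQ lam N) - 2 * √(2 * lam * logb 2 N)
      - logb 2 (paramD lam N)) =O[atTop] fun _ => (1 : ℝ) := by
  refine IsBigO.of_bound (lam + 2 + 2 * √(2 * lam)) ?_
  filter_upwards [eventually_ge_atTop 1] with N hN
  set ℓ := logb 2 N
  have hℓ : 0 ≤ ℓ := logb_nonneg one_lt_two (by exact_mod_cast hN)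
  have hL : logb 2 (2 * N) = 1 + ℓ := logb_two_mul_natCast (by omega)
  have hcost : |protocolCost lam (paramD lam N) (paramQ lam N) - logb 2 (paramD lam N)
      - 2 * √(2 * lam * logb 2 (2 * N))| ≤ lam + 2 :=
    abs_protocolCost_natCeil_sub_le hlam (by linarith)
  rw [hL, show 2 * lam * (1 + ℓ) = 2 * lam * ℓ + 2 * lam by ring] at hcost
  have hsqrt := abs_sqrt_add_sub_sqrt_le (by positivity : 0 ≤ 2 * lam * ℓ)
    (by positivity : 0 ≤ 2 * lam)
  have hsplit : protocolCost lam (paramD lam N) (paramQ lam N) - 2 * √(2 * lam * ℓ)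
        - logb 2 (paramD lam N)
      = (protocolCost lam (paramD lam N) (paramQ lam N) - logb 2 (paramD lam N)
          - 2 * √(2 * lam * ℓ + 2 * lam)) + 2 * (√(2 * lam * ℓ + 2 * lam) - √(2 * lam * ℓ)) := by
    ring
  rw [norm_one, mul_one, norm_eq_abs, hsplit]
  refine (abs_add_le _ _).trans ?_
  rw [abs_mul, abs_two]
  linarith

lemma logb_paramD_isLittleO :
    (fun N : ℕ => logb 2 (paramD lam N)) =o[atTop] fun N => √(logb 2 N) := by
  have htendsto : Tendsto (fun N : ℕ => √(2 / lam * logb 2 (2 * N))) atTop atTop :=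
    tendsto_sqrt_atTop.comp <| ((tendsto_logb_atTop one_lt_two).comp
      (tendsto_natCast_atTop_atTop.const_mul_atTop two_pos)).const_mul_atTop (by positivity)
  refine (isLittleO_logb_natCeil_atTop.comp_tendsto htendsto).trans_isBigO ?_
  refine IsBigO.of_bound √(2 * (2 / lam)) ?_
  filter_upwards [eventually_ge_atTop 2] with N hN
  have hℓ : 1 ≤ logb 2 N := (le_logb_iff_rpow_le one_lt_two (by positivity)).2 (by simpa using hN)
  rw [Function.comp_apply, id, norm_of_nonneg (sqrt_nonneg _), norm_of_nonneg (sqrt_nonneg _),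
    ← sqrt_mul (by positivity), logb_two_mul_natCast (by omega)]
  exact sqrt_le_sqrt (by nlinarith [div_pos two_pos hlam])

lemma protocolCost_params_sub_isLittleO :
    (fun N : ℕ => protocolCost lam (paramD lam N) (paramQ lam N) - 2 * √(2 * lam * logb 2 N))
      =o[atTop] fun N => √(logb 2 N) := by
  have hone : (fun _ => (1 : ℝ)) =o[atTop] fun N : ℕ => √(logb 2 N) :=
    (isLittleO_one_left_iff ℝ).2 <| by
      simpa only [norm_of_nonneg (sqrt_nonneg _)] using tendsto_sqrt_logb_natCast_atTop
  simpa using ((protocolCost_params_sub_isBigO_one hlam).trans_isLittleO hone).add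
    (logb_paramD_isLittleO hlam)

end params

/-- Parameter optimization: with λ = (log₂ e)/2, d = ⌈√((2/λ)·log₂(2N))⌉ and
q = ⌈2^{√((λ/2)·log₂(2N))}⌉, one has q^d ≥ 2N and
λd + log₂(dq²) = 2√(2λ·log₂ N) + o(√(log₂ N)). -/
theorem stmt_14 (lam : ℝ) (hlam : lam = Real.logb 2 (Real.exp 1) / 2)
    (d q : ℕ → ℕ)
    (hd : ∀ N : ℕ, d N = ⌈Real.sqrt ((2 / lam) * Real.logb 2 (2 * N))⌉₊)
    (hq : ∀ N : ℕ, q N = ⌈(2 : ℝ) ^ Real.sqrt ((lam / 2) * Real.logb 2 (2 * N))⌉₊) :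
    (∀ N : ℕ, 1 ≤ N → (2 * N : ℝ) ≤ (q N : ℝ) ^ d N) ∧
    (fun N : ℕ => lam * d N + Real.logb 2 ((d N : ℝ) * (q N : ℝ) ^ 2) -
        2 * Real.sqrt (2 * lam * Real.logb 2 N))
      =o[atTop] (fun N : ℕ => Real.sqrt (Real.logb 2 N)) := by
  have hlam_pos : 0 < lam :=
    hlam ▸ div_pos (logb_pos one_lt_two (one_lt_exp_iff.2 one_pos)) two_pos
  obtain rfl : d = paramD lam := funext hd
  obtain rfl : q = paramQ lam := funext hq
  exact ⟨fun N hN => two_mul_le_paramQ_pow_paramD hlam_pos hN,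
    protocolCost_params_sub_isLittleO hlam_pos⟩
end
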